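/- For every n ≥ 2, the assignment φ(f_1) = (e_1 + e_{1̄})/2 and φ(f_k) = e_k for 2 ≤ k ≤ 2n, where f_1, …, f_{2n} are the generators of 𝔢_{C_{2n}}, extends to a well-defined Lie algebra homomorphism φ : 𝔢_{C_{2n}} → 𝔢_{D_{2n+1}}. -/

import Mathlib

/-!
By the universal property of the free Lie algebra it suffices that the proposed images satisfy
the defining relations of `𝔢_{C_{2n}}`. The relations among `f_2, …, f_{2n}` become relations of
`𝔢_{D_{2n+1}}`, and `f_1` commutes with `f_j`, `j ≥ 3`, because both `e_1` and `e_{1̄}` do. The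
Serre relation of `f_2` against `f_1` holds because `e_2` satisfies it against `e_1` and `e_{1̄}`
alike. The cubic relation `ad(f_1)³ f_2 = 0` holds because `e_1` and `e_{1̄}` commute and each
satisfies the Serre relation against `e_2`.
-/

noncomputable section

open FreeLieAlgebra Matrix

abbrev FL (n : ℕ) : Type := FreeLieAlgebra ℂ (Fin n)

/-- Defining relations of the type `C` electrical Lie algebra (index `i` ↔ generator
`e_{i+1}`). -/
def relC (n : ℕ) : Set (FL n) :=
  {x | ∃ i j : Fin n, ((i : ℕ) + 2 ≤ (j : ℕ) ∨ (j : ℕ) + 2 ≤ (i : ℕ)) ∧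
        x = ⁅of ℂ i, of ℂ j⁆} ∪
  {x | ∃ i j : Fin n, ((i : ℕ) + 1 = (j : ℕ) ∨ (j : ℕ) + 1 = (i : ℕ)) ∧ (i : ℕ) ≠ 0 ∧
        x = ⁅of ℂ i, ⁅of ℂ i, of ℂ j⁆⁆ + (2 : ℂ) • of ℂ i} ∪
  {x | ∃ i j : Fin n, (i : ℕ) = 0 ∧ (j : ℕ) = 1 ∧
        x = ⁅of ℂ i, ⁅of ℂ i, ⁅of ℂ i, of ℂ j⁆⁆⁆}

/-- The electrical Lie algebra of type `C_n`. -/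
abbrev eC (n : ℕ) : Type := FL n ⧸ LieSubmodule.lieSpan ℂ (FL n) (relC n)

/-- The generator `e_{i+1}` of `eC n`. -/
def gC (n : ℕ) (i : Fin n) : eC n :=
  LieSubmodule.Quotient.mk' (LieSubmodule.lieSpan ℂ (FL n) (relC n)) (of ℂ i)

/-- The generators of `eC n` as a function on `1`-based labels `1, …, n` (and junk value `0`
outside this range). -/
def gC' (n : ℕ) (k : ℕ) : eC n :=
  if h : 1 ≤ k ∧ k ≤ n then gC n ⟨k - 1, by omega⟩ else 0

/-- Defining relations of the type `D` electrical Lie algebra with generators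
`e_{1̄}, e_1, e_2, …, e_{n-1}`; index `0` corresponds to `e_{1̄}` and index `i ≥ 1`
corresponds to `e_i`. -/
def relD (n : ℕ) : Set (FL n) :=
  {x | ∃ i j : Fin n, ((i : ℕ) = 0 ∨ (i : ℕ) = 1) ∧ (j : ℕ) = 2 ∧
        x = ⁅of ℂ i, ⁅of ℂ i, of ℂ j⁆⁆ + (2 : ℂ) • of ℂ i} ∪
  {x | ∃ i j : Fin n, (i : ℕ) = 2 ∧ ((j : ℕ) = 0 ∨ (j : ℕ) = 1) ∧
        x = ⁅of ℂ i, ⁅of ℂ i, of ℂ j⁆⁆ + (2 : ℂ) • of ℂ i} ∪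
  {x | ∃ i j : Fin n, (i : ℕ) = 0 ∧ (j : ℕ) = 1 ∧ x = ⁅of ℂ i, of ℂ j⁆} ∪
  {x | ∃ i j : Fin n, (i : ℕ) ≤ 1 ∧ 3 ≤ (j : ℕ) ∧ x = ⁅of ℂ i, of ℂ j⁆} ∪
  {x | ∃ i j : Fin n, 2 ≤ (i : ℕ) ∧ 2 ≤ (j : ℕ) ∧
        ((i : ℕ) + 1 = (j : ℕ) ∨ (j : ℕ) + 1 = (i : ℕ)) ∧
        x = ⁅of ℂ i, ⁅of ℂ i, of ℂ j⁆⁆ + (2 : ℂ) • of ℂ i} ∪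
  {x | ∃ i j : Fin n, 2 ≤ (i : ℕ) ∧ 2 ≤ (j : ℕ) ∧
        ((i : ℕ) + 2 ≤ (j : ℕ) ∨ (j : ℕ) + 2 ≤ (i : ℕ)) ∧ x = ⁅of ℂ i, of ℂ j⁆}

/-- The electrical Lie algebra of type `D_n` (on `n` generators `e_{1̄}, e_1, …, e_{n-1}`). -/
abbrev eD (n : ℕ) : Type := FL n ⧸ LieSubmodule.lieSpan ℂ (FL n) (relD n)

/-- The generators of `eD n`: `gD n 0 = e_{1̄}` and `gD n i = e_i` for `i ≥ 1`. -/
def gD (n : ℕ) (i : Fin n) : eD n :=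
  LieSubmodule.Quotient.mk' (LieSubmodule.lieSpan ℂ (FL n) (relD n)) (of ℂ i)

namespace LieIdeal

variable {R L L' : Type*} [CommRing R] [LieRing L] [LieAlgebra R L] [LieRing L'] [LieAlgebra R L']

def liftQ (I : LieIdeal R L) (f : L →ₗ⁅R⁆ L') (h : I ≤ f.ker) : (L ⧸ I) →ₗ⁅R⁆ L' :=
  { (I : Submodule R L).liftQ f.toLinearMap (fun x hx => LieHom.mem_ker.1 (h hx)) with
    map_lie' := by
      rintro ⟨x⟩ ⟨y⟩
      exact f.map_lie x y }

@[simp]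
theorem liftQ_mk (I : LieIdeal R L) (f : L →ₗ⁅R⁆ L') (h : I ≤ f.ker) (x : L) :
    liftQ I f h (LieSubmodule.Quotient.mk' I x) = f x :=
  rfl

end LieIdeal

/-- Since `ad a` and `ad b` commute, every degree-three monomial in them kills `c`: two equal
letters adjacent to `c` produce a multiple of `a` or `b`, which the remaining letter kills. -/
theorem lie_add_lie_add_lie_add_eq_zero {R L : Type*} [CommRing R] [LieRing L] [LieAlgebra R L]
    {a b c : L} (t : R) (hab : ⁅a, b⁆ = 0) (ha : ⁅a, ⁅a, c⁆⁆ = t • a) (hb : ⁅b, ⁅b, c⁆⁆ = t • b) :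
    ⁅a + b, ⁅a + b, ⁅a + b, c⁆⁆⁆ = 0 := by
  have hba : ⁅b, a⁆ = 0 := by rw [← lie_skew, hab, neg_zero]
  have hcomm : ∀ x : L, ⁅a, ⁅b, x⁆⁆ = ⁅b, ⁅a, x⁆⁆ := fun x => by
    rw [leibniz_lie, hab, zero_lie, zero_add]
  have hA : ∀ y : L, ⁅y, a⁆ = 0 → ⁅y, ⁅a, ⁅a, c⁆⁆⁆ = 0 := fun y hy => by
    rw [ha, lie_smul t y a, hy, smul_zero]
  have hB : ∀ y : L, ⁅y, b⁆ = 0 → ⁅y, ⁅b, ⁅b, c⁆⁆⁆ = 0 := fun y hy => by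
    rw [hb, lie_smul t y b, hy, smul_zero]
  have haba : ⁅a, ⁅b, ⁅a, c⁆⁆⁆ = 0 := by rw [hcomm]; exact hA b hba
  have hbba : ⁅b, ⁅b, ⁅a, c⁆⁆⁆ = 0 := by rw [← hcomm, ← hcomm]; exact hB a hab
  simp only [lie_add, add_lie, hcomm c, hA a (lie_self a), hA b hba, hB b (lie_self b),
    hB a hab, haba, hbba, add_zero]

section RelationsD

variable {n : ℕ}

theorem mk'_relD_eq_zero {x : FL n} (hx : x ∈ relD n) :
    LieSubmodule.Quotient.mk' (LieSubmodule.lieSpan ℂ (FL n) (relD n)) x = 0 :=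
  (LieSubmodule.Quotient.mk_eq_zero _).2 (LieSubmodule.subset_lieSpan hx)

theorem gD_lie_gD_eq_zero {i j : Fin n} (h : ⁅of ℂ i, of ℂ j⁆ ∈ relD n) :
    ⁅gD n i, gD n j⁆ = 0 :=
  mk'_relD_eq_zero h

theorem gD_lie_gD_lie_gD {i j : Fin n}
    (h : ⁅of ℂ i, ⁅of ℂ i, of ℂ j⁆⁆ + (2 : ℂ) • of ℂ i ∈ relD n) :
    ⁅gD n i, ⁅gD n i, gD n j⁆⁆ = (-2 : ℂ) • gD n i := by
  have h0 := mk'_relD_eq_zero h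
  rw [map_add, map_smul] at h0
  rw [neg_smul]
  exact eq_neg_of_add_eq_zero_left h0

theorem gD_lie_lie_of_le_one_of_eq_two {i j : Fin n} (hi : (i : ℕ) = 0 ∨ (i : ℕ) = 1)
    (hj : (j : ℕ) = 2) : ⁅gD n i, ⁅gD n i, gD n j⁆⁆ = (-2 : ℂ) • gD n i :=
  gD_lie_gD_lie_gD (.inl (.inl (.inl (.inl (.inl ⟨i, j, hi, hj, rfl⟩)))))

theorem gD_lie_lie_of_eq_two_of_le_one {i j : Fin n} (hi : (i : ℕ) = 2)
    (hj : (j : ℕ) = 0 ∨ (j : ℕ) = 1) : ⁅gD n i, ⁅gD n i, gD n j⁆⁆ = (-2 : ℂ) • gD n i :=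
  gD_lie_gD_lie_gD (.inl (.inl (.inl (.inl (.inr ⟨i, j, hi, hj, rfl⟩)))))

theorem gD_lie_of_eq_zero_of_eq_one {i j : Fin n} (hi : (i : ℕ) = 0) (hj : (j : ℕ) = 1) :
    ⁅gD n i, gD n j⁆ = 0 :=
  gD_lie_gD_eq_zero (.inl (.inl (.inl (.inr ⟨i, j, hi, hj, rfl⟩))))

theorem gD_lie_of_le_one_of_three_le {i j : Fin n} (hi : (i : ℕ) ≤ 1) (hj : 3 ≤ (j : ℕ)) :
    ⁅gD n i, gD n j⁆ = 0 :=
  gD_lie_gD_eq_zero (.inl (.inl (.inr ⟨i, j, hi, hj, rfl⟩)))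

theorem gD_lie_lie_of_adjacent {i j : Fin n} (hi : 2 ≤ (i : ℕ)) (hj : 2 ≤ (j : ℕ))
    (hij : (i : ℕ) + 1 = j ∨ (j : ℕ) + 1 = i) :
    ⁅gD n i, ⁅gD n i, gD n j⁆⁆ = (-2 : ℂ) • gD n i :=
  gD_lie_gD_lie_gD (.inl (.inr ⟨i, j, hi, hj, hij, rfl⟩))

theorem gD_lie_of_distant {i j : Fin n} (hi : 2 ≤ (i : ℕ)) (hj : 2 ≤ (j : ℕ))
    (hij : (i : ℕ) + 2 ≤ j ∨ (j : ℕ) + 2 ≤ i) : ⁅gD n i, gD n j⁆ = 0 :=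
  gD_lie_gD_eq_zero (.inr ⟨i, j, hi, hj, hij, rfl⟩)

end RelationsD

/-- `f_1 ↦ (e_1 + e_{1̄}) / 2` and `f_{i+1} ↦ e_{i+1}` otherwise, where `f_{i+1}` is `of ℂ i` and
`e_{i+1}` is `gD (m + 1) i.succ`. -/
def phiGen (m : ℕ) (i : Fin m) : eD (m + 1) :=
  if (i : ℕ) = 0 then (2⁻¹ : ℂ) • (gD (m + 1) i.succ + gD (m + 1) ⟨0, m.succ_pos⟩)
  else gD (m + 1) i.succ

section PhiGen

variable {m : ℕ}

theorem phiGen_of_val_eq_zero {i : Fin m} (hi : (i : ℕ) = 0) :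
    phiGen m i = (2⁻¹ : ℂ) • (gD (m + 1) i.succ + gD (m + 1) ⟨0, m.succ_pos⟩) :=
  if_pos hi

theorem phiGen_of_val_ne_zero {i : Fin m} (hi : (i : ℕ) ≠ 0) :
    phiGen m i = gD (m + 1) i.succ :=
  if_neg hi

theorem phiGen_lie_phiGen_of_add_two_le {i j : Fin m} (hij : (i : ℕ) + 2 ≤ j) :
    ⁅phiGen m i, phiGen m j⁆ = 0 := by
  have hj : 3 ≤ (j.succ : ℕ) := by rw [Fin.val_succ]; omega
  rw [phiGen_of_val_ne_zero (i := j) (by omega)]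
  by_cases hi : (i : ℕ) = 0
  · have hi1 : (i.succ : ℕ) ≤ 1 := by rw [Fin.val_succ, hi]
    rw [phiGen_of_val_eq_zero hi, smul_lie (L := eD (m + 1)), add_lie,
      gD_lie_of_le_one_of_three_le hi1 hj,
      gD_lie_of_le_one_of_three_le (by simp) hj, add_zero, smul_zero]
  · rw [phiGen_of_val_ne_zero hi]
    apply gD_lie_of_distant <;> simp only [Fin.val_succ] <;> omega

theorem phiGen_lie_phiGen_of_distant {i j : Fin m} (hij : (i : ℕ) + 2 ≤ j ∨ (j : ℕ) + 2 ≤ i) :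
    ⁅phiGen m i, phiGen m j⁆ = 0 := by
  rcases hij with hij | hji
  · exact phiGen_lie_phiGen_of_add_two_le hij
  · rw [← lie_skew, phiGen_lie_phiGen_of_add_two_le hji, neg_zero]

theorem phiGen_lie_lie_of_adjacent {i j : Fin m} (hi : (i : ℕ) ≠ 0)
    (hij : (i : ℕ) + 1 = j ∨ (j : ℕ) + 1 = i) :
    ⁅phiGen m i, ⁅phiGen m i, phiGen m j⁆⁆ = (-2 : ℂ) • phiGen m i := by
  rw [phiGen_of_val_ne_zero hi]
  by_cases hj : (j : ℕ) = 0
  · have hi2 : (i.succ : ℕ) = 2 := by rw [Fin.val_succ]; omega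
    have hj1 : (j.succ : ℕ) = 1 := by rw [Fin.val_succ, hj]
    rw [phiGen_of_val_eq_zero hj]
    simp only [lie_smul (L := eD (m + 1)), lie_add,
      gD_lie_lie_of_eq_two_of_le_one hi2 (.inr hj1),
      gD_lie_lie_of_eq_two_of_le_one (j := ⟨0, m.succ_pos⟩) hi2 (.inl rfl)]
    module
  · rw [phiGen_of_val_ne_zero hj]
    apply gD_lie_lie_of_adjacent <;> simp only [Fin.val_succ] <;> omega

theorem phiGen_lie_lie_lie_of_eq_zero_of_eq_one {i j : Fin m} (hi : (i : ℕ) = 0)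
    (hj : (j : ℕ) = 1) :
    ⁅phiGen m i, ⁅phiGen m i, ⁅phiGen m i, phiGen m j⁆⁆⁆ = 0 := by
  have hj2 : (j.succ : ℕ) = 2 := by rw [Fin.val_succ, hj]
  have hi1 : (i.succ : ℕ) = 1 := by rw [Fin.val_succ, hi]
  have hab : ⁅gD (m + 1) i.succ, gD (m + 1) ⟨0, m.succ_pos⟩⁆ = 0 := by
    rw [← lie_skew, gD_lie_of_eq_zero_of_eq_one rfl hi1, neg_zero]
  rw [phiGen_of_val_eq_zero hi, phiGen_of_val_ne_zero (by omega)]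
  simp only [smul_lie (L := eD (m + 1)), lie_smul (L := eD (m + 1)),
    lie_add_lie_add_lie_add_eq_zero (-2 : ℂ) hab (gD_lie_lie_of_le_one_of_eq_two (.inr hi1) hj2)
      (gD_lie_lie_of_le_one_of_eq_two (.inl rfl) hj2), smul_zero]

theorem lift_phiGen_eq_zero_of_mem_relC {x : FL m} (hx : x ∈ relC m) :
    FreeLieAlgebra.lift ℂ (phiGen m) x = 0 := by
  rcases hx with (⟨i, j, hij, rfl⟩ | ⟨i, j, hij, hi, rfl⟩) | ⟨i, j, hi, hj, rfl⟩
  · simpa using phiGen_lie_phiGen_of_distant hij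
  · simp [phiGen_lie_lie_of_adjacent hi hij]
  · simpa using phiGen_lie_lie_lie_of_eq_zero_of_eq_one hi hj

end PhiGen

theorem lieSpan_relC_le_ker_lift_phiGen (m : ℕ) :
    LieSubmodule.lieSpan ℂ (FL m) (relC m) ≤ (FreeLieAlgebra.lift ℂ (phiGen m)).ker :=
  LieSubmodule.lieSpan_le.2 fun _ hx => LieHom.mem_ker.2 (lift_phiGen_eq_zero_of_mem_relC hx)

theorem stmt16 (n : ℕ) (hn : 2 ≤ n) :
    ∃ φ : eC (2 * n) →ₗ⁅ℂ⁆ eD (2 * n + 1),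
      φ (gC (2 * n) ⟨0, by omega⟩) =
        (2⁻¹ : ℂ) • (gD (2 * n + 1) ⟨1, by omega⟩ + gD (2 * n + 1) ⟨0, by omega⟩) ∧
      ∀ k : ℕ, 2 ≤ k → (hk : k ≤ 2 * n) →
        φ (gC (2 * n) ⟨k - 1, by omega⟩) = gD (2 * n + 1) ⟨k, by omega⟩ := by
  refine ⟨LieIdeal.liftQ _ _ (lieSpan_relC_le_ker_lift_phiGen (2 * n)), ?_, fun k hk2 hk => ?_⟩
  · simp only [gC, LieIdeal.liftQ_mk, FreeLieAlgebra.lift_of_apply]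
    exact phiGen_of_val_eq_zero rfl
  · simp only [gC, LieIdeal.liftQ_mk, FreeLieAlgebra.lift_of_apply]
    rw [phiGen_of_val_ne_zero (by dsimp only; omega)]
    exact congrArg _ (Fin.ext (by simp only [Fin.val_succ]; omega))
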